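/- arXiv:0902.1910 — 3 statements merged into one kernel-verified Lean document; each statement's English description precedes it below -/
import Mathlib

section
/- Let p, q be coprime integers with p ≠ 0, let t ∈ ℝ with t ≠ 0, and let v = t·(p,q). Then the set { s ∈ ℝ : there exists γ ∈ SL(2,ℤ) with γ·σ(v) = σ(v)·u(s) } is exactly (1/t²)·ℤ = { k/t² : k ∈ ℤ }. -/
open Matrix MeasureTheory Filter Topology

noncomputable section

abbrev SL2Z := Matrix.SpecialLinearGroup (Fin 2) ℤ

/-- The real matrix associated to an element of `SL(2,ℤ)`. -/
def toR (γ : SL2Z) : Matrix (Fin 2) (Fin 2) ℝ :=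
  (γ : Matrix (Fin 2) (Fin 2) ℤ).map (Int.cast)

/-- The Euclidean plane. -/
abbrev E2 := EuclideanSpace ℝ (Fin 2)

/-- The vector of `ℝ²` with coordinates `a`, `b`. -/
def vec (a b : ℝ) : E2 := (WithLp.equiv 2 (Fin 2 → ℝ)).symm ![a, b]

/-- The action of `SL(2,ℤ)` on `ℝ²` by matrix-vector multiplication. -/
def act (γ : SL2Z) (v : E2) : E2 :=
  (WithLp.equiv 2 (Fin 2 → ℝ)).symm ((toR γ).mulVec (WithLp.equiv 2 (Fin 2 → ℝ) v))

/-- The Frobenius (euclidean) norm of a 2×2 real matrix. -/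
def frobNorm (A : Matrix (Fin 2) (Fin 2) ℝ) : ℝ := Real.sqrt (∑ i, ∑ j, (A i j) ^ 2)

/-- A vector of `ℝ²` is primitive if its coordinates are coprime integers. -/
def IsPrimitive (v : E2) : Prop := ∃ p q : ℤ, Int.gcd p q = 1 ∧ v 0 = p ∧ v 1 = q

/-- The set of points of rational slope and period `ρ`: points `v` such that `√ρ • v`
is primitive. -/
def P (ρ : ℝ) : Set E2 := {v | IsPrimitive (Real.sqrt ρ • v)}

/-- The spectrum of periods of `v`: the euclidean distance from `v` to `P ρ`. -/
def Dv (v : E2) (ρ : ℝ) : ℝ := Metric.infDist v (P ρ)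

/-- The unipotent matrix `u(s) = [[1, s], [0, 1]]`. -/
def uMat (s : ℝ) : Matrix (Fin 2) (Fin 2) ℝ := !![1, s; 0, 1]

/-- The section `σ(a, b) = [[a, 0], [b, a⁻¹]]`. -/
def σMat (a b : ℝ) : Matrix (Fin 2) (Fin 2) ℝ := !![a, 0; b, a⁻¹]

/-!
Since `σ(v)` is invertible, `γ σ(v) = σ(v) u(s)` says `γ = σ(v) u(s) σ(v)⁻¹`, which for
`v = t(p,q)` is `1 + t²s • [[-pq, p²], [-q², pq]]`. This matrix has determinant `1` for every `s`,
so it comes from `SL(2,ℤ)` exactly when its entries are integers, i.e. when `t²s p²` and `t²s q²`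
are integers; as `p²` and `q²` are coprime, this means `t²s ∈ ℤ`.
-/

/-- `conjUMat a b s = σ(a,b) u(s) σ(a,b)⁻¹` (see `conjUMat_mul_σMat`). -/
def conjUMat {R : Type*} [CommRing R] (a b s : R) : Matrix (Fin 2) (Fin 2) R :=
  !![1 - a * b * s, a ^ 2 * s; -(b ^ 2 * s), 1 + a * b * s]

theorem det_conjUMat {R : Type*} [CommRing R] (a b s : R) : (conjUMat a b s).det = 1 := by
  rw [conjUMat, det_fin_two_of]; ring

theorem conjUMat_map {R S : Type*} [CommRing R] [CommRing S] (f : R →+* S) (a b s : R) :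
    (conjUMat a b s).map f = conjUMat (f a) (f b) (f s) := by
  ext i j; fin_cases i <;> fin_cases j <;> simp [conjUMat]

theorem conjUMat_mul_mul {R : Type*} [CommRing R] (t a b s : R) :
    conjUMat (t * a) (t * b) s = conjUMat a b (t ^ 2 * s) := by
  simp only [conjUMat]; ring_nf

theorem isUnit_σMat {a : ℝ} (ha : a ≠ 0) (b : ℝ) : IsUnit (σMat a b) := by
  rw [isUnit_iff_isUnit_det, σMat, det_fin_two_of]; simp [ha]

theorem conjUMat_mul_σMat {a : ℝ} (ha : a ≠ 0) (b s : ℝ) :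
    conjUMat a b s * σMat a b = σMat a b * uMat s := by
  rw [conjUMat, σMat, uMat, mul_fin_two, mul_fin_two]
  ext i j; fin_cases i <;> fin_cases j <;> simp [field]; ring

theorem mul_σMat_eq_σMat_mul_uMat_iff {a : ℝ} (ha : a ≠ 0) (b s : ℝ)
    (A : Matrix (Fin 2) (Fin 2) ℝ) : A * σMat a b = σMat a b * uMat s ↔ A = conjUMat a b s := by
  rw [← conjUMat_mul_σMat ha, (isUnit_σMat ha b).mul_left_inj]

theorem IsCoprime.exists_intCast_eq {R : Type*} [CommRing R] {m n i j : ℤ} (h : IsCoprime m n)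
    {r : R} (hi : m * r = i) (hj : n * r = j) : ∃ k : ℤ, r = k := by
  obtain ⟨x, y, hxy⟩ := h
  refine ⟨x * i + y * j, ?_⟩
  have hxyR : (x * m + y * n : R) = 1 := by simpa using congrArg (Int.cast (R := R)) hxy
  push_cast
  rw [← hi, ← hj]
  linear_combination (-r) * hxyR

/-- For `v = t·(p,q)` with `p, q` coprime, `p ≠ 0`, `t ≠ 0`, the set of real `s` such that
`γ·σ(v) = σ(v)·u(s)` for some `γ ∈ SL(2,ℤ)` is exactly `(1/t²)·ℤ`. -/
theorem period_set_eq (p q : ℤ) (hpq : Int.gcd p q = 1) (hp : p ≠ 0) (t : ℝ) (ht : t ≠ 0) :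
    {s : ℝ | ∃ γ : SL2Z, toR γ * σMat (t * p) (t * q) = σMat (t * p) (t * q) * uMat s}
      = {s : ℝ | ∃ k : ℤ, s = k / t ^ 2} := by
  have htp : t * p ≠ 0 := mul_ne_zero ht (Int.cast_ne_zero.mpr hp)
  have htoR (γ : SL2Z) : toR γ = (γ : Matrix (Fin 2) (Fin 2) ℤ).map (Int.castRingHom ℝ) := rfl
  ext s
  simp only [Set.mem_ofPred_eq, mul_σMat_eq_σMat_mul_uMat_iff htp, conjUMat_mul_mul, htoR]
  constructor
  · rintro ⟨γ, hγ⟩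
    have h01 := congrFun (congrFun hγ 0) 1
    have h10 := congrFun (congrFun hγ 1) 0
    simp only [map_apply, conjUMat, of_apply, cons_val', cons_val_one, cons_val_zero,
      cons_val_fin_one, Int.coe_castRingHom] at h01 h10
    have hcop : IsCoprime (p ^ 2) (-q ^ 2) :=
      (Int.isCoprime_iff_gcd_eq_one.mpr hpq).pow.neg_right
    obtain ⟨k, hk⟩ := hcop.exists_intCast_eq (r := t ^ 2 * s) (i := γ 0 1) (j := γ 1 0)
      (by push_cast; exact h01.symm) (by push_cast; rw [h10]; ring)
    exact ⟨k, by rw [← hk]; field_simp⟩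
  · rintro ⟨k, rfl⟩
    refine ⟨⟨conjUMat p q k, det_conjUMat p q k⟩, ?_⟩
    rw [conjUMat_map]
    simp [mul_div_cancel₀ _ (pow_ne_zero 2 ht)]
end
end

section
/- Let v ∈ ℝ², let w ∈ ℝ² be a nonzero vector of rational slope with period ρ(w) = h(w)²/|w|², let T > 0, and let γ ∈ SL(2,ℤ) with ‖γ‖ ≤ T. Then |γ·v − w| ≥ D_v(ρ(w))/T. -/
open Matrix MeasureTheory Filter Topology

noncomputable section

/-!
`SL(2,ℤ)` maps primitive vectors to primitive vectors and commutes with scalars, so it preserves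
each `P ρ`; in particular `γ⁻¹ w ∈ P (ρ(w))`. Hence
`D_v(ρ(w)) ≤ |v - γ⁻¹ w| = |γ⁻¹ (γ v - w)| ≤ ‖γ⁻¹‖ |γ v - w|`, the last step by Cauchy–Schwarz,
and `‖γ⁻¹‖ = ‖γ‖` because the inverse of a determinant-one `2 × 2` matrix only permutes its
entries up to sign.
-/

lemma act_eq_toLpLin (γ : SL2Z) (x : E2) : act γ x = Matrix.toLpLin 2 2 (toR γ) x := rfl

lemma act_apply (γ : SL2Z) (x : E2) (i : Fin 2) :
    act γ x i = toR γ i 0 * x 0 + toR γ i 1 * x 1 := by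
  change (toR γ *ᵥ WithLp.ofLp x) i = _
  simp [Matrix.mulVec, dotProduct, Fin.sum_univ_two]

lemma act_sub (γ : SL2Z) (x y : E2) : act γ (x - y) = act γ x - act γ y := by
  simp only [act_eq_toLpLin, map_sub]

lemma act_smul (γ : SL2Z) (c : ℝ) (x : E2) : act γ (c • x) = c • act γ x := by
  simp only [act_eq_toLpLin, map_smul]

lemma toR_eq_coe_map (γ : SL2Z) :
    toR γ = (Matrix.SpecialLinearGroup.map (Int.castRingHom ℝ) γ : Matrix (Fin 2) (Fin 2) ℝ) :=
  rfl

lemma toR_inv_mul_self (γ : SL2Z) : toR γ⁻¹ * toR γ = 1 := by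
  rw [toR_eq_coe_map, toR_eq_coe_map, ← Matrix.SpecialLinearGroup.coe_mul, ← map_mul,
    inv_mul_cancel, map_one, Matrix.SpecialLinearGroup.coe_one]

lemma act_inv_act (γ : SL2Z) (x : E2) : act γ⁻¹ (act γ x) = x := by
  rw [act_eq_toLpLin, act_eq_toLpLin, ← LinearMap.comp_apply, ← Matrix.toLpLin_mul_same,
    toR_inv_mul_self, Matrix.toLpLin_one, LinearMap.id_apply]

lemma frobNorm_toR_inv (γ : SL2Z) : frobNorm (toR γ⁻¹) = frobNorm (toR γ) := by
  rw [Matrix.SpecialLinearGroup.SL2_inv_expl γ]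
  simp only [frobNorm, toR, Matrix.map, cons_val', cons_val_fin_one, of_apply, Fin.sum_univ_two,
    cons_val_zero, cons_val_one, Int.cast_neg, even_two, Even.neg_pow]
  congr 1
  ring

lemma norm_act_le (γ : SL2Z) (x : E2) : ‖act γ x‖ ≤ frobNorm (toR γ) * ‖x‖ := by
  simp only [EuclideanSpace.norm_eq, Real.norm_eq_abs, sq_abs, frobNorm, Fin.sum_univ_two]
  rw [← Real.sqrt_mul (by positivity)]
  apply Real.sqrt_le_sqrt
  simp only [act_apply]
  nlinarith [sq_nonneg (toR γ 0 0 * x 1 - toR γ 0 1 * x 0),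
    sq_nonneg (toR γ 1 0 * x 1 - toR γ 1 1 * x 0)]

lemma dist_act_le (γ : SL2Z) (x y : E2) :
    dist (act γ x) (act γ y) ≤ frobNorm (toR γ) * dist x y := by
  rw [dist_eq_norm, dist_eq_norm, ← act_sub]
  exact norm_act_le γ (x - y)

-- If `u p + v q = 1`, then `(u, v) · adj γ` is a Bézout pair for `γ (p, q)`, as `adj γ · γ = 1`.
lemma IsCoprime.specialLinearGroup_mulVec {R : Type*} [CommRing R]
    (γ : Matrix.SpecialLinearGroup (Fin 2) R) {p q : R} (h : IsCoprime p q) :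
    IsCoprime (γ 0 0 * p + γ 0 1 * q) (γ 1 0 * p + γ 1 1 * q) := by
  obtain ⟨u, v, huv⟩ := h
  have hdet : γ 0 0 * γ 1 1 - γ 0 1 * γ 1 0 = 1 := by
    rw [← Matrix.det_fin_two, Matrix.SpecialLinearGroup.det_coe]
  exact ⟨u * γ 1 1 - v * γ 1 0, v * γ 0 0 - u * γ 0 1, by
    linear_combination (γ 0 0 * γ 1 1 - γ 0 1 * γ 1 0) * huv + hdet⟩

lemma isPrimitive_vec {p q : ℤ} (h : Int.gcd p q = 1) : IsPrimitive (vec p q) :=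
  ⟨p, q, h, rfl, rfl⟩

lemma IsPrimitive.neg {x : E2} (h : IsPrimitive x) : IsPrimitive (-x) := by
  obtain ⟨p, q, hpq, hx0, hx1⟩ := h
  exact ⟨-p, -q, by rwa [Int.neg_gcd, Int.gcd_neg], by simp [hx0], by simp [hx1]⟩

lemma IsPrimitive.act {x : E2} (h : IsPrimitive x) (γ : SL2Z) : IsPrimitive (act γ x) := by
  obtain ⟨p, q, hpq, hx0, hx1⟩ := h
  have hcop := (Int.isCoprime_iff_gcd_eq_one.mpr hpq).specialLinearGroup_mulVec γ
  exact ⟨_, _, Int.isCoprime_iff_gcd_eq_one.mp hcop,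
    by simp [act_apply, toR, hx0, hx1], by simp [act_apply, toR, hx0, hx1]⟩

lemma act_mem_P {ρ : ℝ} {x : E2} (h : x ∈ P ρ) (γ : SL2Z) : act γ x ∈ P ρ := by
  change IsPrimitive (Real.sqrt ρ • act γ x)
  rw [← act_smul]
  exact IsPrimitive.act h γ

lemma smul_vec_mem_P {t : ℝ} (ht : t ≠ 0) {p q : ℤ} (hpq : Int.gcd p q = 1) :
    t • vec p q ∈ P (1 / t ^ 2) := by
  change IsPrimitive (Real.sqrt (1 / t ^ 2) • t • vec p q)
  rw [smul_smul, one_div, ← inv_pow, Real.sqrt_sq_eq_abs, abs_inv]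
  rcases ht.lt_or_gt with ht | ht
  · rw [abs_of_neg ht, show (-t)⁻¹ * t = -1 by field_simp, neg_one_smul]
    exact (isPrimitive_vec hpq).neg
  · rw [abs_of_pos ht, inv_mul_cancel₀ ht.ne', one_smul]
    exact isPrimitive_vec hpq

/-- If `w = t·(p,q)` is a nonzero vector of rational slope (so its period is
`ρ(w) = 1/t² = h(w)²/|w|²`) and `γ ∈ SL(2,ℤ)` has norm at most `T`, then
`|γ·v − w| ≥ D_v(ρ(w))/T`. -/
theorem gap_around_rational (v : E2) (t : ℝ) (ht : t ≠ 0) (p q : ℤ)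
    (hpq : Int.gcd p q = 1) (w : E2) (hw : w = t • vec (p : ℝ) (q : ℝ))
    (T : ℝ) (hT : 0 < T) (γ : SL2Z) (hγ : frobNorm (toR γ) ≤ T) :
    Dv v (1 / t ^ 2) / T ≤ dist (act γ v) w := by
  have hw_mem : act γ⁻¹ w ∈ P (1 / t ^ 2) := act_mem_P (hw ▸ smul_vec_mem_P ht hpq) γ⁻¹
  calc Dv v (1 / t ^ 2) / T ≤ dist (act γ⁻¹ (act γ v)) (act γ⁻¹ w) / T := by
        rw [act_inv_act]
        gcongr
        exact Metric.infDist_le_dist_of_mem hw_mem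
    _ ≤ frobNorm (toR γ) * dist (act γ v) w / T := by
        gcongr
        rw [← frobNorm_toR_inv]
        exact dist_act_le _ _ _
    _ ≤ dist (act γ v) w := by
        rw [div_le_iff₀ hT, mul_comm]
        gcongr
end
end

section
/- Let v = (a,b) ∈ ℝ² with a ≠ 0 and b/a irrational, and let T ≥ 10 be an integer. Then there exist γ ∈ SL(2,ℤ) with ‖γ‖ ≤ T and a nonzero vector w ∈ ℝ² of rational slope such that |γ·v − w| − D_v(ρ(w))/T ≤ 10·D_v(ρ(w))/T². -/
/-!
Take for `γ` a shear `[[1, n], [0, 1]]` with `|n| = T - 4`, the sign of `n` chosen so that `a` and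
`n b` have the same sign; then `γ (a, b) = (t, b)` with `|t| = |a| + (T - 4) |b|`. The vector
`w = t (1, 0)` has rational slope and lies at distance `|b|` from `γ v`. Every point of `P (ρ w)`
is `|t|` times a nonzero integer vector, so has norm at least `|t|`, which exceeds `‖v‖` by at
least `(T - 5) |b|`; hence `D_v (ρ w) ≥ (T - 5) |b|`, and `(T - 5)(T + 10) ≥ T²` for `T ≥ 10`.
-/

open Matrix MeasureTheory Filter Topology

noncomputable section

def shear (n : ℤ) : SL2Z := ⟨!![1, n; 0, 1], by simp [Matrix.det_fin_two_of]⟩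

lemma toR_shear (n : ℤ) : toR (shear n) = !![1, (n : ℝ); 0, 1] := by
  ext i j; fin_cases i <;> fin_cases j <;> simp [toR, shear]

lemma frobNorm_toR_shear (n : ℤ) : frobNorm (toR (shear n)) = √((n : ℝ) ^ 2 + 2) := by
  rw [toR_shear, frobNorm]
  congr 1
  simp only [Fin.sum_univ_two, of_apply, cons_val', cons_val_zero, cons_val_one, empty_val',
    cons_val_fin_one]
  ring

lemma act_shear (n : ℤ) (a b : ℝ) : act (shear n) (vec a b) = vec (a + n * b) b := by
  rw [act, _root_.vec, _root_.vec, toR_shear, Equiv.apply_symm_apply]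
  congr 1
  ext i
  fin_cases i <;> simp [Matrix.mulVec, dotProduct, Fin.sum_univ_two]

lemma smul_vec (t x y : ℝ) : t • vec x y = vec (t * x) (t * y) := by
  ext i; fin_cases i <;> simp [_root_.vec]

lemma dist_vec (x y x' y' : ℝ) : dist (vec x y) (vec x' y') = √((x - x') ^ 2 + (y - y') ^ 2) := by
  simp [EuclideanSpace.dist_eq, Fin.sum_univ_two, _root_.vec, Real.dist_eq, sq_abs]

lemma norm_vec_le (x y : ℝ) : ‖vec x y‖ ≤ |x| + |y| := by
  rw [EuclideanSpace.norm_eq, Real.sqrt_le_left (by positivity)]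
  simp [Fin.sum_univ_two, _root_.vec, sq_abs]
  nlinarith [sq_abs x, sq_abs y, mul_nonneg (abs_nonneg x) (abs_nonneg y)]

lemma one_le_norm_of_isPrimitive {v : E2} (hv : IsPrimitive v) : 1 ≤ ‖v‖ := by
  obtain ⟨p, q, hpq, hp, hq⟩ := hv
  have hpq0 : p ≠ 0 ∨ q ≠ 0 := by
    by_contra! h
    simp [h.1, h.2] at hpq
  have h_sq : (1 : ℝ) ≤ (p : ℝ) ^ 2 + (q : ℝ) ^ 2 := by
    have : (1 : ℤ) ≤ p ^ 2 + q ^ 2 := by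
      rcases hpq0 with h | h <;> nlinarith [Int.one_le_abs h, sq_abs p, sq_abs q]
    exact_mod_cast this
  rw [EuclideanSpace.norm_eq, Real.le_sqrt zero_le_one (by positivity)]
  simpa [Fin.sum_univ_two, hp, hq] using h_sq

lemma inv_sqrt_le_norm_of_mem_P {ρ : ℝ} {u : E2} (hu : u ∈ P ρ) : (√ρ)⁻¹ ≤ ‖u‖ := by
  rcases (Real.sqrt_nonneg ρ).eq_or_lt with hρ | hρ
  · simp [← hρ]
  · have h := one_le_norm_of_isPrimitive hu
    rw [norm_smul, Real.norm_of_nonneg hρ.le] at h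
    rwa [inv_le_iff_one_le_mul₀' hρ]

lemma P_nonempty {ρ : ℝ} (hρ : 0 < ρ) : (P ρ).Nonempty := by
  have : √ρ ≠ 0 := (Real.sqrt_pos.2 hρ).ne'
  exact ⟨vec (√ρ)⁻¹ 0, 1, 0, by simp, by simp [_root_.vec, this], by simp [_root_.vec]⟩

lemma inv_sqrt_sub_norm_le_Dv (v : E2) {ρ : ℝ} (hρ : 0 < ρ) : (√ρ)⁻¹ - ‖v‖ ≤ Dv v ρ := by
  refine le_of_not_gt fun h => ?_
  obtain ⟨u, hu, hvu⟩ := (Metric.infDist_lt_iff (P_nonempty hρ)).1 h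
  have := norm_sub_norm_le u v
  rw [← dist_eq_norm, dist_comm] at this
  linarith [inv_sqrt_le_norm_of_mem_P hu]

lemma abs_add_of_mul_nonneg {α : Type*} [Ring α] [LinearOrder α] [IsStrictOrderedRing α]
    {x y : α} (h : 0 ≤ x * y) : |x + y| = |x| + |y| :=
  (abs_add_eq_add_abs_iff x y).2 (mul_nonneg_iff.1 h)

lemma exists_abs_eq_and_mul_nonneg (a b : ℝ) {m : ℤ} (hm : 0 ≤ m) :
    ∃ n : ℤ, |n| = m ∧ 0 ≤ a * (n * b) := by
  rcases le_total 0 (a * b) with h | h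
  · exact ⟨m, abs_of_nonneg hm, by rw [mul_left_comm]; exact mul_nonneg (by exact_mod_cast hm) h⟩
  · refine ⟨-m, by rw [abs_neg, abs_of_nonneg hm], ?_⟩
    rw [mul_left_comm]
    exact mul_nonneg_of_nonpos_of_nonpos (by exact_mod_cast neg_nonpos.2 hm) h

lemma add_mul_ne_zero_of_irrational {a b : ℝ} (hab : Irrational (b / a)) {n : ℤ} (hn : n ≠ 0) :
    a + n * b ≠ 0 := by
  intro h
  rcases eq_or_ne b 0 with rfl | hb
  · simp at hab
  · refine hab ⟨-1 / n, ?_⟩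
    rw [show a = -(n * b) by linarith]
    have : (n : ℝ) ≠ 0 := by exact_mod_cast hn
    push_cast
    field_simp

lemma sub_div_le_ten_mul_div_sq {x D T : ℝ} (hT : 10 ≤ T) (hx : 0 ≤ x) (hD : (T - 5) * x ≤ D) :
    x - D / T ≤ 10 * D / T ^ 2 := by
  have hT0 : 0 < T := by linarith
  rw [sub_le_iff_le_add, div_add_div _ _ (by positivity) hT0.ne', le_div_iff₀ (by positivity)]
  nlinarith [mul_le_mul_of_nonneg_right hD (by positivity : 0 ≤ 10 * T + T ^ 2),
    mul_nonneg (mul_nonneg hx hT0.le) (by linarith : 0 ≤ T - 10)]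

theorem gap_optimal_general (a b : ℝ) (hab : Irrational (b / a))
    (T : ℤ) (hT : 10 ≤ T) :
    ∃ γ : SL2Z, frobNorm (toR γ) ≤ (T : ℝ) ∧
      ∃ t : ℝ, t ≠ 0 ∧ ∃ p q : ℤ, Int.gcd p q = 1 ∧
        dist (act γ (vec a b)) (t • vec (p : ℝ) (q : ℝ))
            - Dv (vec a b) (1 / t ^ 2) / (T : ℝ)
          ≤ 10 * Dv (vec a b) (1 / t ^ 2) / (T : ℝ) ^ 2 := by
  have hT' : (10 : ℝ) ≤ T := by exact_mod_cast hT
  obtain ⟨n, hn, hsign⟩ := exists_abs_eq_and_mul_nonneg a b (m := T - 4) (by omega)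
  have hn' : |(n : ℝ)| = T - 4 := by rw [← Int.cast_abs, hn]; push_cast; ring
  set t := a + n * b with ht_def
  have ht : t ≠ 0 := add_mul_ne_zero_of_irrational hab (by rintro rfl; rw [abs_zero] at hn; omega)
  have ht_abs : |t| = |a| + (T - 4) * |b| := by rw [abs_add_of_mul_nonneg hsign, abs_mul, hn']
  have hD : (T - 5) * |b| ≤ Dv (vec a b) (1 / t ^ 2) := by
    have h := inv_sqrt_sub_norm_le_Dv (vec a b) (show 0 < 1 / t ^ 2 by positivity)
    rw [show (√(1 / t ^ 2))⁻¹ = |t| by rw [one_div, Real.sqrt_inv, inv_inv, Real.sqrt_sq_eq_abs]] at h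
    linarith [norm_vec_le a b]
  refine ⟨shear n, ?_, t, ht, 1, 0, by simp, ?_⟩
  · rw [frobNorm_toR_shear, Real.sqrt_le_left (by linarith), ← sq_abs, hn']
    nlinarith
  · rw [act_shear, ← ht_def, smul_vec, dist_vec]
    simpa [Real.sqrt_sq_eq_abs] using sub_div_le_ten_mul_div_sq hT' (abs_nonneg b) hD

/-- Optimality of the gap: for `v = (a,b)` with irrational slope and any integer
`T ≥ 10`, there exist `γ ∈ SL(2,ℤ)` with `‖γ‖ ≤ T` and a nonzero vector
`w = t·(p,q)` of rational slope (of period `ρ(w) = 1/t²`) with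
`|γ·v − w| − D_v(ρ(w))/T ≤ 10·D_v(ρ(w))/T²`. -/
theorem gap_optimal (a b : ℝ) (ha : a ≠ 0) (hab : Irrational (b / a))
    (T : ℤ) (hT : 10 ≤ T) :
    ∃ γ : SL2Z, frobNorm (toR γ) ≤ (T : ℝ) ∧
      ∃ t : ℝ, t ≠ 0 ∧ ∃ p q : ℤ, Int.gcd p q = 1 ∧
        dist (act γ (vec a b)) (t • vec (p : ℝ) (q : ℝ))
            - Dv (vec a b) (1 / t ^ 2) / (T : ℝ)
          ≤ 10 * Dv (vec a b) (1 / t ^ 2) / (T : ℝ) ^ 2 :=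
  gap_optimal_general a b hab T hT
end
end
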